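/- A priori estimate on the discrete time derivative: there is a universal constant C < ∞ such that for any h > 0, any measurable initial unit vector field u⁰ : 𝕋³ → 𝕊¹, and any N ∈ ℕ with T = Nh, the iterates of the thresholding scheme satisfy h ∑_{n=1}^{N} ∫_{𝕋³} |(u^n − u^{n−1})/h|² dx ≤ C (1 + T/h) E_h(u⁰). -/

import Mathlib

open MeasureTheory Real Filter
open scoped RealInnerProductSpace Topology NNReal

noncomputable section

abbrev Euc (d : ℕ) := EuclideanSpace ℝ (Fin d)

/-- The Gaussian heat kernel on ℝ^d at time `h`. -/
def heatKer (d : ℕ) (h : ℝ) (z : Euc d) : ℝ :=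
  (4 * π * h) ^ (-(d : ℝ) / 2) * Real.exp (-‖z‖ ^ 2 / (4 * h))

/-- Convolution of the heat kernel with a function. -/
def heatConv {d : ℕ} {F : Type*} [NormedAddCommGroup F] [NormedSpace ℝ F]
    (h : ℝ) (u : Euc d → F) (x : Euc d) : F :=
  ∫ z : Euc d, heatKer d h z • u (x - z)

/-- Convolution of `∂ᵢ G_h` with a function. -/
def heatConvD {d : ℕ} {F : Type*} [NormedAddCommGroup F] [NormedSpace ℝ F]
    (h : ℝ) (i : Fin d) (u : Euc d → F) (x : Euc d) : F :=
  ∫ z : Euc d, (fderiv ℝ (heatKer d h) z (EuclideanSpace.single i 1)) • u (x - z)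

/-- Fundamental domain of the torus ℝ^d/ℤ^d. -/
def cube (d : ℕ) : Set (Euc d) := {x | ∀ i, 0 ≤ x i ∧ x i < 1}

/-- An integer vector, regarded as an element of ℝ^d. -/
def intVec {d : ℕ} (k : Fin d → ℤ) : Euc d := WithLp.toLp 2 (fun i => (k i : ℝ))

/-- ℤ^d-periodicity. -/
def ZPeriodic {d : ℕ} {α : Type*} (u : Euc d → α) : Prop :=
  ∀ (x : Euc d) (k : Fin d → ℤ), u (x + intVec k) = u x

/-- The localized thresholding energy. -/
def EhLoc (h : ℝ) (u : Euc 3 → Euc 2) (ψ : Euc 3 → ℝ) : ℝ :=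
  (1 / h) * ∫ x in cube 3, ψ x * (1 - ⟪u x, heatConv h u x⟫)

/-- The thresholding energy. -/
def Eh (h : ℝ) (u : Euc 3 → Euc 2) : ℝ :=
  (1 / h) * ∫ x in cube 3, (1 - ⟪u x, heatConv h u x⟫)

/-- Squared Frobenius norm of a linear map between Euclidean spaces. -/
def frobSq {d m : ℕ} (L : Euc d →L[ℝ] Euc m) : ℝ :=
  ∑ i : Fin d, ∑ j : Fin m, (L (EuclideanSpace.single i 1) j) ^ 2

/-- One step of the thresholding scheme: diffusion followed by projection onto 𝕊¹. -/
def threshStep (h : ℝ) (u : Euc 3 → Euc 2) : Euc 3 → Euc 2 :=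
  fun x => ‖heatConv h u x‖⁻¹ • heatConv h u x

/-- `Du` is the weak Jacobian of `u` on the torus. -/
def IsWeakJacobian {d m : ℕ} (u : Euc d → Euc m) (Du : Euc d → Euc d →L[ℝ] Euc m) : Prop :=
  ∀ φ : Euc d → ℝ, ContDiff ℝ (⊤ : ℕ∞) φ → ZPeriodic φ →
    ∀ (i : Fin d) (j : Fin m),
      ∫ x in cube d, u x j * fderiv ℝ φ x (EuclideanSpace.single i 1)
        = - ∫ x in cube d, Du x (EuclideanSpace.single i 1) j * φ x


-- ===== auxiliary development =====


/-- 1-d heat kernel -/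
def g1 (h t : ℝ) : ℝ := (4 * π * h) ^ (-(1 : ℝ) / 2) * Real.exp (-t ^ 2 / (4 * h))

lemma g1_nonneg {h : ℝ} (hh : 0 < h) (t : ℝ) : 0 ≤ g1 h t := by
  exact mul_nonneg (Real.rpow_nonneg (by positivity) _) (Real.exp_nonneg _)

lemma g1_integral {h : ℝ} (hh : 0 < h) : ∫ t : ℝ, g1 h t = 1 := by
  have h4 : (0:ℝ) < 4 * π * h := by positivity
  have : ∀ t : ℝ, g1 h t = (4 * π * h) ^ (-(1:ℝ)/2) * Real.exp (-(1/(4*h)) * t ^ 2) := by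
    intro t; rw [g1]; ring_nf
  simp_rw [this]
  rw [MeasureTheory.integral_const_mul, integral_gaussian]
  rw [show π / (1/(4*h)) = 4 * π * h by field_simp]
  rw [show (-(1:ℝ)/2) = -(1/2) by norm_num, Real.rpow_neg h4.le, Real.sqrt_eq_rpow]
  rw [inv_mul_cancel₀]
  positivity

lemma g1_mul {h1 h2 : ℝ} (H1 : 0 < h1) (H2 : 0 < h2) (t s : ℝ) :
    g1 h1 s * g1 h2 (t - s)
      = g1 (h1 + h2) t * g1 (h1 * h2 / (h1 + h2)) (s - h1 * t / (h1 + h2)) := by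
  have h12 : (0:ℝ) < h1 + h2 := by linarith
  have hH : (0:ℝ) < h1 * h2 / (h1 + h2) := by positivity
  have hπ : (0:ℝ) < π := pi_pos
  simp only [g1]
  rw [show (4 * π * h1) ^ (-(1:ℝ)/2) * Real.exp (-s ^ 2 / (4 * h1)) *
      ((4 * π * h2) ^ (-(1:ℝ)/2) * Real.exp (-(t-s) ^ 2 / (4 * h2)))
      = ((4 * π * h1) ^ (-(1:ℝ)/2) * (4 * π * h2) ^ (-(1:ℝ)/2)) *
        (Real.exp (-s ^ 2 / (4 * h1)) * Real.exp (-(t-s) ^ 2 / (4 * h2))) by ring]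
  rw [show (4 * π * (h1+h2)) ^ (-(1:ℝ)/2) * Real.exp (-t ^ 2 / (4 * (h1+h2))) *
      ((4 * π * (h1 * h2 / (h1 + h2))) ^ (-(1:ℝ)/2) *
        Real.exp (-(s - h1 * t / (h1 + h2)) ^ 2 / (4 * (h1 * h2 / (h1 + h2)))))
      = ((4 * π * (h1+h2)) ^ (-(1:ℝ)/2) * (4 * π * (h1 * h2 / (h1 + h2))) ^ (-(1:ℝ)/2)) *
        (Real.exp (-t ^ 2 / (4 * (h1+h2))) *
          Real.exp (-(s - h1 * t / (h1 + h2)) ^ 2 / (4 * (h1 * h2 / (h1 + h2))))) by ring]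
  congr 1
  · rw [← Real.mul_rpow (by positivity) (by positivity), ← Real.mul_rpow (by positivity) (by positivity)]
    congr 1
    field_simp
  · rw [← Real.exp_add, ← Real.exp_add]
    congr 1
    field_simp
    ring

lemma heatKer_prod {d : ℕ} {h : ℝ} (hh : 0 < h) (z : Euc d) :
    heatKer d h z = ∏ i, g1 h (z i) := by
  have h4 : (0:ℝ) < 4 * π * h := by positivity
  simp only [heatKer, g1]
  rw [Finset.prod_mul_distrib, Finset.prod_const, ← Real.exp_sum]
  congr 1
  · rw [← Real.rpow_natCast ((4*π*h) ^ (-(1:ℝ)/2)) _, ← Real.rpow_mul h4.le]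
    congr 1
    simp [Finset.card_univ]
    ring
  · rw [EuclideanSpace.norm_eq, Real.sq_sqrt (by positivity)]
    simp only [Real.norm_eq_abs, sq_abs, neg_div, Finset.sum_neg_distrib, Finset.sum_div]

lemma heatKer_nonneg {d : ℕ} {h : ℝ} (hh : 0 < h) (z : Euc d) : 0 ≤ heatKer d h z := by
  rw [heatKer_prod hh]
  exact Finset.prod_nonneg fun i _ => g1_nonneg hh _

lemma continuous_heatKer {d : ℕ} {h : ℝ} (hh : 0 < h) : Continuous (heatKer d h) := by
  unfold heatKer
  exact continuous_const.mul ((continuous_norm.pow 2).neg.div_const _).rexp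

lemma heatKer_integral {d : ℕ} {h : ℝ} (hh : 0 < h) : ∫ z : Euc d, heatKer d h z = 1 := by
  have := (EuclideanSpace.volume_preserving_symm_measurableEquiv_toLp (Fin d)).symm
  rw [← this.integral_comp (MeasurableEquiv.measurableEmbedding _) (heatKer d h)]
  have : ∀ y : Fin d → ℝ, heatKer d h ((MeasurableEquiv.toLp 2 (Fin d → ℝ)).symm.symm y)
      = ∏ i, g1 h (y i) := by
    intro y
    rw [heatKer_prod hh]
    rfl
  simp_rw [this]
  rw [MeasureTheory.integral_fintype_prod_volume_eq_prod (f := fun _ : Fin d => g1 h)]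
  simp [g1_integral hh]

lemma heatKer_integrable {d : ℕ} {h : ℝ} (hh : 0 < h) : Integrable (heatKer d h) := by
  have := (EuclideanSpace.volume_preserving_symm_measurableEquiv_toLp (Fin d)).symm
  rw [← this.integrable_comp_emb (MeasurableEquiv.measurableEmbedding _)]
  have : (heatKer d h) ∘ (MeasurableEquiv.toLp 2 (Fin d → ℝ)).symm.symm
      = fun y : Fin d → ℝ => ∏ i, g1 h (y i) := by
    ext y
    rw [Function.comp_apply, heatKer_prod hh]
    rfl
  rw [this]
  have int1 : Integrable (g1 h) := by
    unfold g1
    refine Integrable.const_mul ?_ _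
    have : ∀ t : ℝ, Real.exp (-t^2/(4*h)) = Real.exp (-(1/(4*h)) * t^2) := by
      intro t; ring_nf
    simp_rw [this]
    exact integrable_exp_neg_mul_sq (by positivity)
  exact Integrable.fintype_prod (fun i => int1)

lemma heatKer_conv {d : ℕ} {h1 h2 : ℝ} (H1 : 0 < h1) (H2 : 0 < h2) (z : Euc d) :
    ∫ a : Euc d, heatKer d h1 a * heatKer d h2 (z - a) = heatKer d (h1 + h2) z := by
  have h12 : (0:ℝ) < h1 + h2 := by linarith
  have hH : (0:ℝ) < h1 * h2 / (h1 + h2) := by positivity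
  set w : Euc d := WithLp.toLp 2 (fun i => h1 * z i / (h1 + h2) : Fin d → ℝ) with hw
  have key : ∀ a : Euc d, heatKer d h1 a * heatKer d h2 (z - a)
      = heatKer d (h1+h2) z * heatKer d (h1 * h2 / (h1+h2)) (a - w) := by
    intro a
    rw [heatKer_prod H1, heatKer_prod H2, heatKer_prod h12, heatKer_prod hH,
      ← Finset.prod_mul_distrib, ← Finset.prod_mul_distrib]
    refine Finset.prod_congr rfl fun i _ => ?_
    have hz : (z - a) i = z i - a i := rfl
    have hw' : (a - w) i = a i - h1 * z i / (h1 + h2) := rfl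
    rw [hz, hw', g1_mul H1 H2 (z i) (a i)]
  simp_rw [key]
  rw [MeasureTheory.integral_const_mul, integral_sub_right_eq_self (heatKer d (h1*h2/(h1+h2))) w,
    heatKer_integral hH, mul_one]

lemma measurable_coord {d : ℕ} (i : Fin d) : Measurable fun x : Euc d => x i :=
  (measurable_pi_apply i).comp (MeasurableEquiv.toLp 2 (Fin d → ℝ)).symm.measurable

lemma measurableSet_cube (d : ℕ) : MeasurableSet (cube d) := by
  have : cube d = ⋂ i, ((fun x : Euc d => x i) ⁻¹' (Set.Ico 0 1)) := by
    ext x; simp [cube, Set.mem_Ico]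
  rw [this]
  exact MeasurableSet.iInter fun i => (measurable_coord i) measurableSet_Ico

lemma volume_cube_lt_top (d : ℕ) : volume (cube d) < ⊤ := by
  have hsub : cube d ⊆ Metric.closedBall 0 (Real.sqrt d) := by
    intro x hx
    rw [Metric.mem_closedBall, dist_zero_right, EuclideanSpace.norm_eq]
    apply Real.sqrt_le_sqrt
    calc ∑ i, ‖x i‖ ^ 2 ≤ ∑ _i : Fin d, 1 := by
          refine Finset.sum_le_sum fun i _ => ?_
          have := (hx i).1; have := (hx i).2
          rw [Real.norm_eq_abs, abs_of_nonneg (hx i).1]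
          nlinarith
      _ = d := by simp
  exact lt_of_le_of_lt (measure_mono hsub) (isCompact_closedBall 0 _).measure_lt_top

lemma integrableOn_cube {d : ℕ} {E : Type*} [NormedAddCommGroup E] {f : Euc d → E}
    (hm : AEStronglyMeasurable f (volume.restrict (cube d))) (M : ℝ)
    (hb : ∀ x, ‖f x‖ ≤ M) : IntegrableOn f (cube d) := by
  refine Integrable.mono' (g := fun _ => M) ?_ hm (Filter.Eventually.of_forall hb)
  exact integrableOn_const (volume_cube_lt_top d).ne

section conv
variable {d m : ℕ} {h : ℝ} {u : Euc d → Euc m}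

lemma heatConv_integrand_integrable (hh : 0 < h) (hu : Measurable u)
    (hb : ∀ x, ‖u x‖ ≤ 1) (x : Euc d) :
    Integrable (fun z : Euc d => heatKer d h z • u (x - z)) := by
  refine Integrable.mono' (heatKer_integrable hh) ?_ ?_
  · exact (((continuous_heatKer hh).measurable).smul
      (hu.comp (measurable_const.sub measurable_id))).aestronglyMeasurable
  · refine Filter.Eventually.of_forall fun z => ?_
    rw [norm_smul, Real.norm_eq_abs, abs_of_nonneg (heatKer_nonneg hh z)]
    calc heatKer d h z * ‖u (x - z)‖ ≤ heatKer d h z * 1 :=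
          mul_le_mul_of_nonneg_left (hb _) (heatKer_nonneg hh z)
      _ = heatKer d h z := mul_one _

lemma norm_heatConv_le (hh : 0 < h) (hu : Measurable u) (hb : ∀ x, ‖u x‖ ≤ 1) (x : Euc d) :
    ‖heatConv h u x‖ ≤ 1 := by
  calc ‖heatConv h u x‖ ≤ ∫ z : Euc d, ‖heatKer d h z • u (x - z)‖ :=
        norm_integral_le_integral_norm _
    _ ≤ ∫ z : Euc d, heatKer d h z := by
        refine integral_mono ((heatConv_integrand_integrable hh hu hb x).norm)
          (heatKer_integrable hh) fun z => ?_
        rw [norm_smul, Real.norm_eq_abs, abs_of_nonneg (heatKer_nonneg hh z)]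
        calc heatKer d h z * ‖u (x - z)‖ ≤ heatKer d h z * 1 :=
              mul_le_mul_of_nonneg_left (hb _) (heatKer_nonneg hh z)
          _ = heatKer d h z := mul_one _
    _ = 1 := heatKer_integral hh

lemma stronglyMeasurable_heatConv (hh : 0 < h) (hu : Measurable u) :
    StronglyMeasurable (heatConv h u) := by
  apply MeasureTheory.StronglyMeasurable.integral_prod_right'
    (f := fun p : Euc d × Euc d => heatKer d h p.2 • u (p.1 - p.2))
  exact (((continuous_heatKer hh).measurable.comp measurable_snd).smul
    (hu.comp (measurable_fst.sub measurable_snd))).stronglyMeasurable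

lemma heatConv_periodic (hp : ZPeriodic u) : ZPeriodic (heatConv h u) := by
  intro x k
  unfold heatConv
  congr 1
  funext z
  rw [show x + intVec k - z = (x - z) + intVec k from by abel, hp]

end conv






/-- The standard basis of `Euc d` as a plain `Basis`. -/
def eucBasis (d : ℕ) : Module.Basis (Fin d) ℝ (Euc d) :=
  (Pi.basisFun ℝ (Fin d)).map (WithLp.linearEquiv 2 ℝ (Fin d → ℝ)).symm

lemma eucBasis_repr {d : ℕ} (x : Euc d) (i : Fin d) : (eucBasis d).repr x i = x i := by
  simp [eucBasis, Module.Basis.map_repr]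

lemma cube_eq_fd (d : ℕ) : cube d = ZSpan.fundamentalDomain (eucBasis d) := by
  ext x
  simp only [cube, Set.mem_setOf_eq, ZSpan.mem_fundamentalDomain, eucBasis_repr, Set.mem_Ico]

lemma mem_span_eucBasis {d : ℕ} (g : Euc d)
    (hg : g ∈ Submodule.span ℤ (Set.range (eucBasis d))) : ∃ k : Fin d → ℤ, g = intVec k := by
  induction hg using Submodule.span_induction with
  | mem y hy =>
      obtain ⟨i, rfl⟩ := hy
      refine ⟨fun j => if i = j then 1 else 0, ?_⟩
      ext j
      simp only [eucBasis, Module.Basis.map_apply, Pi.basisFun_apply, intVec]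
      by_cases hij : i = j <;> simp [hij, WithLp.linearEquiv]
  | zero => exact ⟨0, by ext j; simp [intVec]⟩
  | add y z _ _ hy hz =>
      obtain ⟨k1, rfl⟩ := hy; obtain ⟨k2, rfl⟩ := hz
      exact ⟨k1 + k2, by ext j; simp [intVec]⟩
  | smul n y _ hy =>
      obtain ⟨k, rfl⟩ := hy
      refine ⟨n • k, ?_⟩
      ext j
      simp [intVec, zsmul_eq_mul]

lemma isAddFundamentalDomain_cube (d : ℕ) :
    IsAddFundamentalDomain (Submodule.span ℤ (Set.range (eucBasis d))).toAddSubgroup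
      (cube d) volume := by
  rw [cube_eq_fd]
  exact ZSpan.isAddFundamentalDomain' (eucBasis d) volume

lemma shift_integral {d : ℕ} {f : Euc d → ℝ}
    (hm : AEStronglyMeasurable f volume) (hp : ZPeriodic f) (a : Euc d) :
    ∫ x in cube d, f (x + a) = ∫ x in cube d, f x := by
  classical
  set Λ := (Submodule.span ℤ (Set.range (eucBasis d))).toAddSubgroup with hΛ
  have : Countable Λ :=
    inferInstanceAs (Countable (Submodule.span ℤ (Set.range (eucBasis d))))
  have FD1 : IsAddFundamentalDomain Λ (cube d) volume := isAddFundamentalDomain_cube d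
  set s₂ : Set (Euc d) := (fun x : Euc d => x - a) ⁻¹' (cube d) with hs₂
  have qmp : Measure.QuasiMeasurePreserving (fun x : Euc d => x - a) volume volume :=
    (measurePreserving_sub_right volume a).quasiMeasurePreserving
  have FD2 : IsAddFundamentalDomain Λ s₂ volume := by
    refine FD1.preimage_of_equiv qmp (e := id) Function.bijective_id fun g x => ?_
    show (g +ᵥ x) - a = g +ᵥ (x - a)
    show (↑g + x) - a = ↑g + (x - a)
    abel
  have hinv : ∀ (g : Λ) (x : Euc d), f (g +ᵥ x) = f x := by
    rintro ⟨g, hg⟩ x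
    obtain ⟨k, rfl⟩ := mem_span_eucBasis g hg
    show f (intVec k + x) = f x
    rw [add_comm, hp]
  have step2 : ∫ x in cube d, f x = ∫ x in s₂, f x := FD1.setIntegral_eq FD2 hinv
  have mp : MeasurePreserving (fun x : Euc d => x + a) volume volume :=
    measurePreserving_add_right volume a
  have hc : cube d = (fun x : Euc d => x + a) ⁻¹' s₂ := by
    ext x
    simp [s₂, add_sub_cancel_right]
  have step1 : ∫ x in cube d, f (x + a) = ∫ y in s₂, f y := by
    rw [hc]
    exact mp.setIntegral_preimage_emb (MeasurableEquiv.addRight a).measurableEmbedding f s₂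
  rw [step1, ← step2]



section sym
variable {d m : ℕ}
variable {f g : Euc d → Euc m} {h : ℝ}

lemma heatKer_neg {h : ℝ} (a : Euc d) : heatKer d h (-a) = heatKer d h a := by
  unfold heatKer; rw [norm_neg]

lemma inner_abs_le_one (hfb : ∀ x, ‖f x‖ ≤ 1) (hgb : ∀ x, ‖g x‖ ≤ 1) (x y : Euc d) :
    |⟪f x, g y⟫| ≤ 1 := by
  refine (abs_real_inner_le_norm _ _).trans ?_
  calc ‖f x‖ * ‖g y‖ ≤ 1 * 1 :=
        mul_le_mul (hfb x) (hgb y) (norm_nonneg _) zero_le_one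
    _ = 1 := by norm_num

/-- The correlation function `I w = ∫_cube ⟪f x, g (x - w)⟫`. -/
def corrI (f g : Euc d → Euc m) (w : Euc d) : ℝ := ∫ x in cube d, ⟪f x, g (x - w)⟫

lemma stronglyMeasurable_corrI (hf : Measurable f) (hg : Measurable g) :
    StronglyMeasurable (corrI f g) := by
  apply MeasureTheory.StronglyMeasurable.integral_prod_right'
    (f := fun p : Euc d × Euc d => ⟪f p.2, g (p.2 - p.1)⟫)
  exact ((hf.comp measurable_snd).inner
    (hg.comp (measurable_snd.sub measurable_fst))).stronglyMeasurable

lemma corrI_abs_le (hf : Measurable f) (hg : Measurable g) (hfb : ∀ x, ‖f x‖ ≤ 1) (hgb : ∀ x, ‖g x‖ ≤ 1) (w : Euc d) :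
    |corrI f g w| ≤ (volume (cube d)).toReal := by
  have hmeas : AEStronglyMeasurable (fun x => ⟪f x, g (x - w)⟫)
      (volume.restrict (cube d)) :=
    (hf.inner (hg.comp (measurable_id.sub measurable_const))).aestronglyMeasurable
  have := norm_setIntegral_le_of_norm_le_const (μ := volume) (s := cube d)
    (volume_cube_lt_top d) (C := 1)
    (f := fun x => ⟪f x, g (x - w)⟫) (fun x _ => by
      rw [Real.norm_eq_abs]; exact inner_abs_le_one hfb hgb x (x - w))
  simp only [one_mul] at this
  simpa [corrI, measureReal_def] using this

lemma corrI_shift (hf : Measurable f) (hg : Measurable g)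
    (hfp : ZPeriodic f) (hgp : ZPeriodic g) (a b : Euc d) :
    ∫ x in cube d, ⟪f (x - a), g (x - b)⟫ = corrI f g (b - a) := by
  have key := shift_integral (f := fun y => ⟪f (y - a), g (y - b)⟫)
    (((hf.comp (measurable_id.sub measurable_const)).inner
        (hg.comp (measurable_id.sub measurable_const))).aestronglyMeasurable)
    (fun x k => by
      simp only
      rw [show x + intVec k - a = (x - a) + intVec k from by abel, hfp,
        show x + intVec k - b = (x - b) + intVec k from by abel, hgp]) a
  rw [← key]
  unfold corrI
  congr 1 with x
  show ⟪f (x + a - a), g (x + a - b)⟫ = ⟪f x, g (x - (b - a))⟫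
  rw [add_sub_cancel_right, show x + a - b = x - (b - a) from by abel]
end sym

section sym2
variable {d m : ℕ}
variable {f g : Euc d → Euc m} {h : ℝ}

lemma integrable_ker_mul {t : ℝ} (ht : 0 < t) {φ : Euc d → ℝ}
    (hφm : AEStronglyMeasurable φ volume) (hb : ∀ z, |φ z| ≤ 1) :
    Integrable (fun z : Euc d => heatKer d t z * φ z) := by
  refine (heatKer_integrable ht).mono'
    ((continuous_heatKer ht).aestronglyMeasurable.mul hφm) (Eventually.of_forall fun z => ?_)
  rw [Real.norm_eq_abs, abs_mul, abs_of_nonneg (heatKer_nonneg ht z)]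
  calc heatKer d t z * |φ z| ≤ heatKer d t z * 1 :=
        mul_le_mul_of_nonneg_left (hb z) (heatKer_nonneg ht z)
    _ = heatKer d t z := mul_one _

lemma abs_integral_ker_mul_le {t : ℝ} (ht : 0 < t) {φ : Euc d → ℝ}
    (hφm : AEStronglyMeasurable φ volume) (hb : ∀ z, |φ z| ≤ 1) :
    |∫ z : Euc d, heatKer d t z * φ z| ≤ 1 := by
  rw [← Real.norm_eq_abs]
  calc ‖∫ z : Euc d, heatKer d t z * φ z‖ ≤ ∫ z : Euc d, ‖heatKer d t z * φ z‖ :=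
        norm_integral_le_integral_norm _
    _ ≤ ∫ z : Euc d, heatKer d t z := by
        refine integral_mono (integrable_ker_mul ht hφm hb).norm (heatKer_integrable ht)
          fun z => ?_
        rw [Real.norm_eq_abs, abs_mul, abs_of_nonneg (heatKer_nonneg ht z)]
        calc heatKer d t z * |φ z| ≤ heatKer d t z * 1 :=
              mul_le_mul_of_nonneg_left (hb z) (heatKer_nonneg ht z)
          _ = heatKer d t z := mul_one _
    _ = 1 := heatKer_integral ht

lemma repA (hh : 0 < h) (hf : Measurable f) (hg : Measurable g)
    (hfp : ZPeriodic f) (hgp : ZPeriodic g)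
    (hfb : ∀ x, ‖f x‖ ≤ 1) (hgb : ∀ x, ‖g x‖ ≤ 1) :
    ∫ x in cube d, ⟪f x, heatConv h g x⟫
      = ∫ a : Euc d, heatKer d (h/2) a *
          ∫ b : Euc d, heatKer d (h/2) b * corrI f g (a + b) := by
  have ht : 0 < h/2 := by linarith
  set K := heatKer d (h/2) with hK
  set G := heatKer d h with hG
  set I := corrI f g with hI
  set V := (volume (cube d)).toReal with hV
  have hIm : Measurable I := (stronglyMeasurable_corrI hf hg).measurable
  have hIb : ∀ w, |I w| ≤ V := corrI_abs_le hf hg hfb hgb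
  have hKi : Integrable K := heatKer_integrable ht
  haveI : IsFiniteMeasure (volume.restrict (cube d)) :=
    ⟨by rw [Measure.restrict_apply_univ]; exact volume_cube_lt_top d⟩
  -- step 1 : pointwise expansion
  have step1 : ∀ x : Euc d, ⟪f x, heatConv h g x⟫ = ∫ z : Euc d, G z * ⟪f x, g (x - z)⟫ := by
    intro x
    rw [heatConv, ← integral_inner (heatConv_integrand_integrable hh hg hgb x) (f x)]
    simp_rw [real_inner_smul_right]
    rfl
  -- Fubini no. 1 : cube × z
  have int1 : Integrable (Function.uncurry fun x z : Euc d => G z * ⟪f x, g (x - z)⟫)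
      ((volume.restrict (cube d)).prod volume) := by
    refine Integrable.mono' ((integrable_const (1:ℝ)).mul_prod (heatKer_integrable hh)) ?_
      (Eventually.of_forall fun q => ?_)
    · exact (((continuous_heatKer hh).measurable.comp measurable_snd).mul
        ((hf.comp measurable_fst).inner
          (hg.comp (measurable_fst.sub measurable_snd)))).aestronglyMeasurable
    · show ‖G q.2 * ⟪f q.1, g (q.1 - q.2)⟫‖ ≤ 1 * G q.2
      rw [one_mul, Real.norm_eq_abs, abs_mul, abs_of_nonneg (heatKer_nonneg hh q.2)]
      calc G q.2 * |⟪f q.1, g (q.1 - q.2)⟫| ≤ G q.2 * 1 :=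
            mul_le_mul_of_nonneg_left (inner_abs_le_one hfb hgb _ _) (heatKer_nonneg hh q.2)
        _ = G q.2 := mul_one _
  have swap1 : ∫ x in cube d, ∫ z : Euc d, G z * ⟪f x, g (x - z)⟫
      = ∫ z : Euc d, ∫ x in cube d, G z * ⟪f x, g (x - z)⟫ :=
    integral_integral_swap int1
  -- step 3
  have step3 : ∀ z : Euc d, ∫ x in cube d, G z * ⟪f x, g (x - z)⟫ = G z * I z := by
    intro z
    rw [MeasureTheory.integral_const_mul]
    rfl
  -- step 4 : semigroup property
  have step4 : ∀ z : Euc d, G z * I z = ∫ a : Euc d, K a * K (z - a) * I z := by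
    intro z
    rw [MeasureTheory.integral_mul_const, hK, heatKer_conv ht ht z,
      show h/2 + h/2 = h by ring]
  -- Fubini no. 2 : z × a
  have conv2 : Integrable (fun p : Euc d × Euc d => K p.2 * K (p.1 - p.2))
      (volume.prod volume) := by
    have := hKi.convolution_integrand (ContinuousLinearMap.mul ℝ ℝ) hKi
    simpa using this
  have int2 : Integrable (Function.uncurry fun z a : Euc d => K a * K (z - a) * I z)
      (volume.prod volume) := by
    refine Integrable.mono' (conv2.mul_const V) ?_ (Eventually.of_forall fun q => ?_)
    · exact ((((continuous_heatKer ht).measurable.comp measurable_snd).mul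
        ((continuous_heatKer ht).measurable.comp (measurable_fst.sub measurable_snd))).mul
        (hIm.comp measurable_fst)).aestronglyMeasurable
    · show ‖K q.2 * K (q.1 - q.2) * I q.1‖ ≤ K q.2 * K (q.1 - q.2) * V
      rw [Real.norm_eq_abs, abs_mul, abs_mul, abs_of_nonneg (heatKer_nonneg ht q.2),
        abs_of_nonneg (heatKer_nonneg ht (q.1 - q.2))]
      exact mul_le_mul_of_nonneg_left (hIb q.1)
        (mul_nonneg (heatKer_nonneg ht q.2) (heatKer_nonneg ht _))
  have swap2 : ∫ z : Euc d, ∫ a : Euc d, K a * K (z - a) * I z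
      = ∫ a : Euc d, ∫ z : Euc d, K a * K (z - a) * I z :=
    integral_integral_swap int2
  -- step 7 : shift
  have step7 : ∀ a : Euc d, ∫ z : Euc d, K a * K (z - a) * I z
      = K a * ∫ b : Euc d, K b * I (a + b) := by
    intro a
    simp_rw [mul_assoc]
    rw [MeasureTheory.integral_const_mul]
    congr 1
    have := integral_add_right_eq_self (μ := volume) (fun z => K (z - a) * I z) a
    simp only [add_sub_cancel_right] at this
    rw [← this]
    congr 1
    funext b
    rw [add_comm]
  calc ∫ x in cube d, ⟪f x, heatConv h g x⟫
      = ∫ x in cube d, ∫ z : Euc d, G z * ⟪f x, g (x - z)⟫ := by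
        exact setIntegral_congr_fun (measurableSet_cube d) (fun x _ => step1 x)
    _ = ∫ z : Euc d, ∫ x in cube d, G z * ⟪f x, g (x - z)⟫ := swap1
    _ = ∫ z : Euc d, G z * I z := by simp_rw [step3]
    _ = ∫ z : Euc d, ∫ a : Euc d, K a * K (z - a) * I z := by simp_rw [step4]
    _ = ∫ a : Euc d, ∫ z : Euc d, K a * K (z - a) * I z := swap2
    _ = ∫ a : Euc d, K a * ∫ b : Euc d, K b * I (a + b) := by simp_rw [step7]
end sym2

section sym3
variable {d m : ℕ}
variable {f g : Euc d → Euc m} {h : ℝ}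

set_option maxHeartbeats 1000000 in
lemma repB (ht : 0 < h) (hf : Measurable f) (hg : Measurable g)
    (hfp : ZPeriodic f) (hgp : ZPeriodic g)
    (hfb : ∀ x, ‖f x‖ ≤ 1) (hgb : ∀ x, ‖g x‖ ≤ 1) :
    ∫ x in cube d, ⟪heatConv h f x, heatConv h g x⟫
      = ∫ a : Euc d, heatKer d h a *
          ∫ b : Euc d, heatKer d h b * corrI f g (a - b) := by
  set K := heatKer d h with hK
  set I := corrI f g with hI
  set V := (volume (cube d)).toReal with hV
  have hIm : Measurable I := (stronglyMeasurable_corrI hf hg).measurable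
  have hKi : Integrable K := heatKer_integrable ht
  haveI : IsFiniteMeasure (volume.restrict (cube d)) :=
    ⟨by rw [Measure.restrict_apply_univ]; exact volume_cube_lt_top d⟩
  have hKnn := heatKer_nonneg (d := d) ht
  -- pointwise double expansion
  have expand : ∀ (u : Euc d → Euc m), Measurable u → ∀ hub : (∀ y, ‖u y‖ ≤ 1),
      ∀ (c : Euc m) (x : Euc d), (⟪c, heatConv h u x⟫ : ℝ)
        = ∫ b : Euc d, K b * ⟪c, u (x - b)⟫ := by
    intro u hu hub c x
    rw [heatConv, ← integral_inner (heatConv_integrand_integrable ht hu hub x) c]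
    simp_rw [real_inner_smul_right]
    rfl
  have p1 : ∀ x : Euc d, ⟪heatConv h f x, heatConv h g x⟫
      = ∫ b : Euc d, K b * ∫ a : Euc d, K a * ⟪f (x - a), g (x - b)⟫ := by
    intro x
    rw [expand g hg hgb (heatConv h f x) x]
    congr 1
    funext b
    congr 1
    rw [real_inner_comm, expand f hf hfb (g (x - b)) x]
    congr 1
    funext a
    rw [real_inner_comm]
  -- the inner a-integral, as a function of (x, b), is bounded by 1 and measurable
  have hinb : ∀ (x b : Euc d), |∫ a : Euc d, K a * ⟪f (x - a), g (x - b)⟫| ≤ 1 := by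
    intro x b
    refine abs_integral_ker_mul_le ht ?_ ?_
    · exact ((hf.comp (measurable_const.sub measurable_id)).inner
        (hg.comp measurable_const)).aestronglyMeasurable
    · intro a; exact inner_abs_le_one hfb hgb _ _
  have hinm : StronglyMeasurable (fun q : Euc d × Euc d =>
      ∫ a : Euc d, K a * ⟪f (q.1 - a), g (q.1 - q.2)⟫) := by
    apply MeasureTheory.StronglyMeasurable.integral_prod_right'
      (f := fun p : (Euc d × Euc d) × Euc d =>
        K p.2 * ⟪f (p.1.1 - p.2), g (p.1.1 - p.1.2)⟫)
    exact (((continuous_heatKer ht).measurable.comp measurable_snd).mul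
      ((hf.comp ((measurable_fst.comp measurable_fst).sub measurable_snd)).inner
        (hg.comp ((measurable_fst.comp measurable_fst).sub
          (measurable_snd.comp measurable_fst))))).stronglyMeasurable
  -- Fubini : cube × b
  have int1 : Integrable (Function.uncurry fun x b : Euc d =>
      K b * ∫ a : Euc d, K a * ⟪f (x - a), g (x - b)⟫)
      ((volume.restrict (cube d)).prod volume) := by
    refine Integrable.mono' ((integrable_const (1:ℝ)).mul_prod hKi) ?_
      (Eventually.of_forall fun q => ?_)
    · exact (((continuous_heatKer ht).measurable.comp measurable_snd).stronglyMeasurable.mul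
        hinm).aestronglyMeasurable
    · show ‖K q.2 * ∫ a : Euc d, K a * ⟪f (q.1 - a), g (q.1 - q.2)⟫‖ ≤ 1 * K q.2
      rw [one_mul, Real.norm_eq_abs, abs_mul, abs_of_nonneg (hKnn q.2), mul_comm]
      calc |∫ a : Euc d, K a * ⟪f (q.1 - a), g (q.1 - q.2)⟫| * K q.2 ≤ 1 * K q.2 :=
            mul_le_mul_of_nonneg_right (hinb q.1 q.2) (hKnn q.2)
        _ = K q.2 := one_mul _
      
  have swap1 : ∫ x in cube d, ∫ b : Euc d, K b * ∫ a : Euc d, K a * ⟪f (x - a), g (x - b)⟫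
      = ∫ b : Euc d, ∫ x in cube d, K b * ∫ a : Euc d, K a * ⟪f (x - a), g (x - b)⟫ :=
    integral_integral_swap int1
  -- for fixed b : pull K b out and Fubini cube × a
  have inner_eq : ∀ b : Euc d,
      ∫ x in cube d, ∫ a : Euc d, K a * ⟪f (x - a), g (x - b)⟫
        = ∫ a : Euc d, K a * I (b - a) := by
    intro b
    have int2 : Integrable (Function.uncurry fun x a : Euc d =>
        K a * ⟪f (x - a), g (x - b)⟫) ((volume.restrict (cube d)).prod volume) := by
      refine Integrable.mono' ((integrable_const (1:ℝ)).mul_prod hKi) ?_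
        (Eventually.of_forall fun q => ?_)
      · exact (((continuous_heatKer ht).measurable.comp measurable_snd).mul
          ((hf.comp (measurable_fst.sub measurable_snd)).inner
            (hg.comp (measurable_fst.sub measurable_const)))).aestronglyMeasurable
      · show ‖K q.2 * ⟪f (q.1 - q.2), g (q.1 - b)⟫‖ ≤ 1 * K q.2
        rw [one_mul, Real.norm_eq_abs, abs_mul, abs_of_nonneg (hKnn q.2)]
        calc K q.2 * |⟪f (q.1 - q.2), g (q.1 - b)⟫| ≤ K q.2 * 1 :=
              mul_le_mul_of_nonneg_left (inner_abs_le_one hfb hgb _ _) (hKnn q.2)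
          _ = K q.2 := mul_one _
    rw [integral_integral_swap int2]
    congr 1
    funext a
    rw [MeasureTheory.integral_const_mul, corrI_shift hf hg hfp hgp a b]
  calc ∫ x in cube d, ⟪heatConv h f x, heatConv h g x⟫
      = ∫ x in cube d, ∫ b : Euc d, K b * ∫ a : Euc d, K a * ⟪f (x - a), g (x - b)⟫ :=
        setIntegral_congr_fun (measurableSet_cube d) (fun x _ => p1 x)
    _ = ∫ b : Euc d, ∫ x in cube d, K b * ∫ a : Euc d, K a * ⟪f (x - a), g (x - b)⟫ := swap1
    _ = ∫ b : Euc d, K b * ∫ a : Euc d, K a * I (b - a) := by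
        congr 1
        funext b
        rw [MeasureTheory.integral_const_mul, inner_eq b]
    _ = ∫ a : Euc d, K a * ∫ b : Euc d, K b * I (a - b) := rfl
end sym3

lemma sym {d m : ℕ} {f g : Euc d → Euc m} {h : ℝ} (hh : 0 < h) (hf : Measurable f) (hg : Measurable g)
    (hfp : ZPeriodic f) (hgp : ZPeriodic g)
    (hfb : ∀ x, ‖f x‖ ≤ 1) (hgb : ∀ x, ‖g x‖ ≤ 1) :
    ∫ x in cube d, ⟪f x, heatConv h g x⟫
      = ∫ x in cube d, ⟪heatConv (h/2) f x, heatConv (h/2) g x⟫ := by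
  have ht : 0 < h/2 := by linarith
  rw [repA hh hf hg hfp hgp hfb hgb, repB ht hf hg hfp hgp hfb hgb]
  congr 1
  funext a
  congr 1
  rw [← integral_neg_eq_self (fun b : Euc d => heatKer d (h/2) b * corrI f g (a + b)) volume]
  congr 1
  funext b
  rw [heatKer_neg, ← sub_eq_add_neg]










-- pointwise projection estimate
lemma projP {E : Type*} [NormedAddCommGroup E] [InnerProductSpace ℝ E]
    (a v : E) (ha : ‖a‖ ≤ 1) (hv : ‖v‖ ≤ 1) :
    ‖(‖v‖⁻¹ • v) - a‖ ^ 2 ≤ 4 * (1 - ⟪a, v⟫) := by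
  by_cases h0 : v = 0
  · subst h0
    simp only [norm_zero, inv_zero, zero_smul, zero_sub, norm_neg, inner_zero_right]
    nlinarith [norm_nonneg a]
  · have hs : 0 < ‖v‖ := norm_pos_iff.2 h0
    set s := ‖v‖ with hsdef
    set t : ℝ := ⟪a, v⟫ with htdef
    have hb1 : ‖(‖v‖⁻¹ • v)‖ = 1 := by
      rw [norm_smul, Real.norm_eq_abs, abs_of_pos (inv_pos.2 hs), inv_mul_cancel₀ hs.ne']
    have expand : ‖(‖v‖⁻¹ • v) - a‖ ^ 2
        = ‖(‖v‖⁻¹ • v)‖ ^ 2 - 2 * ⟪(‖v‖⁻¹ • v), a⟫ + ‖a‖ ^ 2 := norm_sub_sq_real _ _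
    have hinner : ⟪(‖v‖⁻¹ • v), a⟫ = s⁻¹ * t := by
      rw [real_inner_smul_left, real_inner_comm]
    have htle : |t| ≤ s := by
      refine (abs_real_inner_le_norm a v).trans ?_
      calc ‖a‖ * ‖v‖ ≤ 1 * ‖v‖ := mul_le_mul_of_nonneg_right ha (norm_nonneg v)
        _ = s := one_mul _
    have ht1 : t ≤ s := (abs_le.1 htle).2
    have ht2 : -s ≤ t := (abs_le.1 htle).1
    have ha2 : ‖a‖ ^ 2 ≤ 1 := by nlinarith [norm_nonneg a]
    rw [expand, hb1, hinner, one_pow]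
    have hmul : s * (1 - 2 * (s⁻¹ * t) + ‖a‖ ^ 2) = s - 2*t + s*‖a‖^2 := by
      field_simp
    rw [← mul_le_mul_iff_right₀ hs, hmul]
    have p1 : (0:ℝ) ≤ (s + t) * (1 - s) :=
      mul_nonneg (by linarith) (by linarith)
    have p2 : (0:ℝ) ≤ s * (s - t) := mul_nonneg hs.le (by linarith)
    have p3 : s * ‖a‖^2 ≤ s * 1 := mul_le_mul_of_nonneg_left ha2 hs.le
    nlinarith [p1, p2, p3]

lemma inner_normalize {E : Type*} [NormedAddCommGroup E] [InnerProductSpace ℝ E] (v : E) :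
    ⟪(‖v‖⁻¹ • v), v⟫ = ‖v‖ := by
  by_cases h0 : v = 0
  · simp [h0]
  · have hs : 0 < ‖v‖ := norm_pos_iff.2 h0
    rw [real_inner_smul_left, real_inner_self_eq_norm_sq]
    field_simp

lemma norm_normalize_le {E : Type*} [NormedAddCommGroup E] [InnerProductSpace ℝ E] (v : E) :
    ‖(‖v‖⁻¹ • v)‖ ≤ 1 := by
  by_cases h0 : v = 0
  · simp [h0]
  · have hs : 0 < ‖v‖ := norm_pos_iff.2 h0
    rw [norm_smul, Real.norm_eq_abs, abs_of_pos (inv_pos.2 hs), inv_mul_cancel₀ hs.ne']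

/-- Invariant of the scheme: measurable, periodic, bounded by 1. -/
def Good (u : Euc 3 → Euc 2) : Prop := Measurable u ∧ ZPeriodic u ∧ ∀ x, ‖u x‖ ≤ 1

lemma threshStep_good {h : ℝ} (hh : 0 < h) {u : Euc 3 → Euc 2} (hu : Good u) :
    Good (threshStep h u) := by
  obtain ⟨hm, hp, hb⟩ := hu
  have hv : Measurable (heatConv h u) := (stronglyMeasurable_heatConv hh hm).measurable
  refine ⟨?_, ?_, ?_⟩
  · exact (hv.norm.inv).smul hv
  · intro x k
    unfold threshStep
    rw [heatConv_periodic hp x k]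
  · intro x
    exact norm_normalize_le _

lemma inner_integrableOn_cube {w1 w2 : Euc 3 → Euc 2} (h1 : Measurable w1) (h2 : Measurable w2)
    (hb1 : ∀ x, ‖w1 x‖ ≤ 1) (hb2 : ∀ x, ‖w2 x‖ ≤ 1) :
    IntegrableOn (fun x => (⟪w1 x, w2 x⟫ : ℝ)) (cube 3) := by
  refine integrableOn_cube (h1.inner h2).aestronglyMeasurable 1 fun x => ?_
  rw [Real.norm_eq_abs]
  refine (abs_real_inner_le_norm _ _).trans ?_
  calc ‖w1 x‖ * ‖w2 x‖ ≤ 1 * 1 := mul_le_mul (hb1 x) (hb2 x) (norm_nonneg _) zero_le_one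
    _ = 1 := by norm_num

lemma mono_step {h : ℝ} (hh : 0 < h) {u : Euc 3 → Euc 2} (hu : Good u) :
    ∫ x in cube 3, ⟪u x, heatConv h u x⟫
      ≤ ∫ x in cube 3, ⟪threshStep h u x, heatConv h (threshStep h u) x⟫ := by
  obtain ⟨hm, hp, hb⟩ := hu
  have ht : 0 < h/2 := by linarith
  set u' := threshStep h u with hu'
  obtain ⟨hm', hp', hb'⟩ := threshStep_good hh ⟨hm, hp, hb⟩
  have hvm : Measurable (heatConv h u) := (stronglyMeasurable_heatConv hh hm).measurable
  have hvb : ∀ x, ‖heatConv h u x‖ ≤ 1 := norm_heatConv_le hh hm hb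
  -- step A
  have stepA : ∫ x in cube 3, ⟪u x, heatConv h u x⟫
      ≤ ∫ x in cube 3, ⟪u' x, heatConv h u x⟫ := by
    refine setIntegral_mono_on (inner_integrableOn_cube hm hvm hb hvb)
      (inner_integrableOn_cube hm' hvm hb' hvb) (measurableSet_cube 3) fun x _ => ?_
    have h1 : (⟪u' x, heatConv h u x⟫ : ℝ) = ‖heatConv h u x‖ := inner_normalize _
    rw [h1]
    calc (⟪u x, heatConv h u x⟫ : ℝ) ≤ ‖u x‖ * ‖heatConv h u x‖ := real_inner_le_norm _ _
      _ ≤ 1 * ‖heatConv h u x‖ := mul_le_mul_of_nonneg_right (hb x) (norm_nonneg _)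
      _ = ‖heatConv h u x‖ := one_mul _
  -- step B
  set F := heatConv (h/2) u with hF
  set F' := heatConv (h/2) u' with hF'
  have hFm : Measurable F := (stronglyMeasurable_heatConv ht hm).measurable
  have hF'm : Measurable F' := (stronglyMeasurable_heatConv ht hm').measurable
  have hFb : ∀ x, ‖F x‖ ≤ 1 := norm_heatConv_le ht hm hb
  have hF'b : ∀ x, ‖F' x‖ ≤ 1 := norm_heatConv_le ht hm' hb'
  have hsym1 : ∫ x in cube 3, ⟪u' x, heatConv h u x⟫ = ∫ x in cube 3, ⟪F' x, F x⟫ :=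
    sym hh hm' hm hp' hp hb' hb
  have hsym2 : ∫ x in cube 3, ⟪u' x, heatConv h u' x⟫ = ∫ x in cube 3, ⟪F' x, F' x⟫ :=
    sym hh hm' hm' hp' hp' hb' hb'
  have hsym3 : ∫ x in cube 3, ⟪u x, heatConv h u x⟫ = ∫ x in cube 3, ⟪F x, F x⟫ :=
    sym hh hm hm hp hp hb hb
  have stepB : ∫ x in cube 3, ⟪F' x, F x⟫
      ≤ ∫ x in cube 3, (2⁻¹ * ⟪F' x, F' x⟫ + 2⁻¹ * ⟪F x, F x⟫) := by
    refine setIntegral_mono_on (inner_integrableOn_cube hF'm hFm hF'b hFb)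
      (((inner_integrableOn_cube hF'm hF'm hF'b hF'b).const_mul _).add
        ((inner_integrableOn_cube hFm hFm hFb hFb).const_mul _)) (measurableSet_cube 3)
      fun x _ => ?_
    have e1 : (⟪F' x, F' x⟫ : ℝ) = ‖F' x‖ ^ 2 := real_inner_self_eq_norm_sq _
    have e2 : (⟪F x, F x⟫ : ℝ) = ‖F x‖ ^ 2 := real_inner_self_eq_norm_sq _
    have e3 : (⟪F' x, F x⟫ : ℝ) ≤ ‖F' x‖ * ‖F x‖ := real_inner_le_norm _ _
    rw [e1, e2]
    nlinarith [sq_nonneg (‖F' x‖ - ‖F x‖)]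
  have split : ∫ x in cube 3, (2⁻¹ * ⟪F' x, F' x⟫ + 2⁻¹ * ⟪F x, F x⟫)
      = 2⁻¹ * (∫ x in cube 3, ⟪F' x, F' x⟫) + 2⁻¹ * (∫ x in cube 3, ⟪F x, F x⟫) := by
    rw [integral_add ((inner_integrableOn_cube hF'm hF'm hF'b hF'b).const_mul _)
      ((inner_integrableOn_cube hFm hFm hFb hFb).const_mul _),
      MeasureTheory.integral_const_mul, MeasureTheory.integral_const_mul]
  have this2 : ∫ x in cube 3, ⟪u x, heatConv h u x⟫
      ≤ 2⁻¹ * (∫ x in cube 3, ⟪F' x, F' x⟫)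
      + 2⁻¹ * (∫ x in cube 3, ⟪F x, F x⟫) := by
    calc ∫ x in cube 3, ⟪u x, heatConv h u x⟫ ≤ ∫ x in cube 3, ⟪u' x, heatConv h u x⟫ := stepA
      _ = ∫ x in cube 3, ⟪F' x, F x⟫ := hsym1
      _ ≤ ∫ x in cube 3, (2⁻¹ * ⟪F' x, F' x⟫ + 2⁻¹ * ⟪F x, F x⟫) := stepB
      _ = 2⁻¹ * (∫ x in cube 3, ⟪F' x, F' x⟫) + 2⁻¹ * (∫ x in cube 3, ⟪F x, F x⟫) := split
  linarith [hsym2, hsym3, this2]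

lemma sqnorm_integrableOn_cube {w1 w2 : Euc 3 → Euc 2} (h1 : Measurable w1) (h2 : Measurable w2)
    (hb1 : ∀ x, ‖w1 x‖ ≤ 1) (hb2 : ∀ x, ‖w2 x‖ ≤ 1) :
    IntegrableOn (fun x => ‖w1 x - w2 x‖ ^ 2) (cube 3) := by
  refine integrableOn_cube ((h1.sub h2).norm.pow_const 2).aestronglyMeasurable 4 fun x => ?_
  rw [Real.norm_eq_abs, abs_of_nonneg (by positivity)]
  have : ‖w1 x - w2 x‖ ≤ 2 := by
    calc ‖w1 x - w2 x‖ ≤ ‖w1 x‖ + ‖w2 x‖ := norm_sub_le _ _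
      _ ≤ 1 + 1 := add_le_add (hb1 x) (hb2 x)
      _ = 2 := by norm_num
  nlinarith [norm_nonneg (w1 x - w2 x)]

lemma diss_step {h : ℝ} (hh : 0 < h) {u : Euc 3 → Euc 2} (hu : Good u) :
    ∫ x in cube 3, ‖threshStep h u x - u x‖ ^ 2
      ≤ 4 * ∫ x in cube 3, (1 - ⟪u x, heatConv h u x⟫) := by
  obtain ⟨hm, hp, hb⟩ := hu
  obtain ⟨hm', hp', hb'⟩ := threshStep_good hh ⟨hm, hp, hb⟩
  have hvm : Measurable (heatConv h u) := (stronglyMeasurable_heatConv hh hm).measurable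
  have hvb : ∀ x, ‖heatConv h u x‖ ≤ 1 := norm_heatConv_le hh hm hb
  rw [← MeasureTheory.integral_const_mul]
  refine setIntegral_mono_on (sqnorm_integrableOn_cube hm' hm hb' hb) ?_
    (measurableSet_cube 3) fun x _ => ?_
  · refine integrableOn_cube ?_ 8 fun x => ?_
    · exact (measurable_const.sub (hm.inner hvm)).aestronglyMeasurable.const_mul 4
    · rw [Real.norm_eq_abs, abs_mul]
      have h1 : |(1:ℝ) - ⟪u x, heatConv h u x⟫| ≤ 2 := by
        have := abs_real_inner_le_norm (u x) (heatConv h u x)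
        have hle : |⟪u x, heatConv h u x⟫| ≤ 1 := by
          refine this.trans ?_
          calc ‖u x‖ * ‖heatConv h u x‖ ≤ 1 * 1 :=
                mul_le_mul (hb x) (hvb x) (norm_nonneg _) zero_le_one
            _ = 1 := by norm_num
        rw [abs_sub_comm]
        calc |⟪u x, heatConv h u x⟫ - 1| ≤ |⟪u x, heatConv h u x⟫| + 1 := by
              refine (abs_sub _ _).trans ?_
              norm_num
          _ ≤ 2 := by linarith
      rw [show |(4:ℝ)| = 4 by norm_num]
      linarith
  · exact projP (u x) (heatConv h u x) (hb x) (hvb x)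

lemma energy_nonneg {h : ℝ} (hh : 0 < h) {u : Euc 3 → Euc 2} (hu : Good u) :
    0 ≤ ∫ x in cube 3, (1 - ⟪u x, heatConv h u x⟫) := by
  obtain ⟨hm, hp, hb⟩ := hu
  have hvb : ∀ x, ‖heatConv h u x‖ ≤ 1 := norm_heatConv_le hh hm hb
  refine setIntegral_nonneg (measurableSet_cube 3) fun x _ => ?_
  have : (⟪u x, heatConv h u x⟫ : ℝ) ≤ 1 := by
    calc (⟪u x, heatConv h u x⟫ : ℝ) ≤ ‖u x‖ * ‖heatConv h u x‖ := real_inner_le_norm _ _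
      _ ≤ 1 * 1 := mul_le_mul (hb x) (hvb x) (norm_nonneg _) zero_le_one
      _ = 1 := by norm_num
  linarith

lemma energy_sub {h : ℝ} (hh : 0 < h) {u : Euc 3 → Euc 2} (hu : Good u) :
    ∫ x in cube 3, (1 - ⟪u x, heatConv h u x⟫)
      = (volume (cube 3)).toReal - ∫ x in cube 3, ⟪u x, heatConv h u x⟫ := by
  obtain ⟨hm, hp, hb⟩ := hu
  have hvm : Measurable (heatConv h u) := (stronglyMeasurable_heatConv hh hm).measurable
  have hvb : ∀ x, ‖heatConv h u x‖ ≤ 1 := norm_heatConv_le hh hm hb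
  rw [integral_sub (integrableOn_cube aestronglyMeasurable_const 1 (fun x => by simp))
    (inner_integrableOn_cube hm hvm hb hvb)]
  congr 1
  rw [setIntegral_const, smul_eq_mul, mul_one, measureReal_def]

lemma energy_mono {h : ℝ} (hh : 0 < h) {u : Euc 3 → Euc 2} (hu : Good u) :
    ∫ x in cube 3, (1 - ⟪threshStep h u x, heatConv h (threshStep h u) x⟫)
      ≤ ∫ x in cube 3, (1 - ⟪u x, heatConv h u x⟫) := by
  rw [energy_sub hh hu, energy_sub hh (threshStep_good hh hu)]
  have := mono_step hh hu
  linarith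


/-- A priori estimate on the discrete time derivative of the thresholding
iterates. -/
theorem discrete_time_derivative_estimate :
    ∃ C : ℝ, 0 < C ∧
      ∀ (h : ℝ), 0 < h →
      ∀ (u0 : Euc 3 → Euc 2), Measurable u0 → ZPeriodic u0 → (∀ x, ‖u0 x‖ = 1) →
      ∀ (U : ℕ → Euc 3 → Euc 2), U 0 = u0 → (∀ n, U (n + 1) = threshStep h (U n)) →
      ∀ (N : ℕ) (T : ℝ), T = N * h →
        h * ∑ n ∈ Finset.range N, ∫ x in cube 3, ‖h⁻¹ • (U (n + 1) x - U n x)‖ ^ 2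
          ≤ C * (1 + T / h) * Eh h u0 := by
  refine ⟨4, by norm_num, ?_⟩
  intro h hh u0 hm0 hp0 hn0 U hU0 hUS N T hT
  -- all iterates are good
  have good : ∀ n, Good (U n) := by
    intro n
    induction n with
    | zero => exact hU0 ▸ ⟨hm0, hp0, fun x => le_of_eq (hn0 x)⟩
    | succ n ih => rw [hUS n]; exact threshStep_good hh ih
  set e : ℕ → ℝ := fun n => ∫ x in cube 3, (1 - ⟪U n x, heatConv h (U n) x⟫) with he
  have hemono : ∀ n, e (n+1) ≤ e n := by
    intro n
    show (∫ x in cube 3, (1 - ⟪U (n+1) x, heatConv h (U (n+1)) x⟫)) ≤ _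
    rw [hUS n]
    exact energy_mono hh (good n)
  have hele : ∀ n, e n ≤ e 0 := by
    intro n
    induction n with
    | zero => exact le_refl _
    | succ n ih => exact (hemono n).trans ih
  have he0 : 0 ≤ e 0 := energy_nonneg hh (good 0)
  have hdiss : ∀ n, ∫ x in cube 3, ‖U (n+1) x - U n x‖ ^ 2 ≤ 4 * e 0 := by
    intro n
    calc ∫ x in cube 3, ‖U (n+1) x - U n x‖ ^ 2
        ≤ 4 * e n := by
          rw [hUS n]
          exact diss_step hh (good n)
      _ ≤ 4 * e 0 := by nlinarith [hele n]
  -- rewrite each term of the sum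
  have hterm : ∀ n, ∫ x in cube 3, ‖h⁻¹ • (U (n+1) x - U n x)‖ ^ 2
      = h⁻¹ ^ 2 * ∫ x in cube 3, ‖U (n+1) x - U n x‖ ^ 2 := by
    intro n
    rw [← MeasureTheory.integral_const_mul]
    congr 1
    funext x
    rw [norm_smul, Real.norm_eq_abs, abs_of_pos (inv_pos.2 hh)]
    ring
  have hsum : ∑ n ∈ Finset.range N, ∫ x in cube 3, ‖h⁻¹ • (U (n + 1) x - U n x)‖ ^ 2
      ≤ N * (h⁻¹ ^ 2 * (4 * e 0)) := by
    calc ∑ n ∈ Finset.range N, ∫ x in cube 3, ‖h⁻¹ • (U (n + 1) x - U n x)‖ ^ 2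
        ≤ ∑ _n ∈ Finset.range N, h⁻¹ ^ 2 * (4 * e 0) := by
          refine Finset.sum_le_sum fun n _ => ?_
          rw [hterm n]
          exact mul_le_mul_of_nonneg_left (hdiss n) (by positivity)
      _ = N * (h⁻¹ ^ 2 * (4 * e 0)) := by
          rw [Finset.sum_const, Finset.card_range, nsmul_eq_mul]
  have hTN : T / h = N := by rw [hT]; field_simp
  have hEh : Eh h u0 = (1/h) * e 0 := by
    show _ = (1/h) * ∫ x in cube 3, (1 - ⟪U 0 x, heatConv h (U 0) x⟫)
    rw [Eh, hU0]
  rw [hEh, hTN]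
  calc h * ∑ n ∈ Finset.range N, ∫ x in cube 3, ‖h⁻¹ • (U (n + 1) x - U n x)‖ ^ 2
      ≤ h * (N * (h⁻¹ ^ 2 * (4 * e 0))) := mul_le_mul_of_nonneg_left hsum hh.le
    _ = 4 * N * ((1/h) * e 0) := by field_simp
    _ ≤ 4 * (1 + N) * ((1/h) * e 0) := by
        have h1 : (0:ℝ) ≤ (1/h) * e 0 := by positivity
        nlinarith [Nat.cast_nonneg (α := ℝ) N]
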